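/- Let C be a binary linear [n,k,d] code with k ≤ n/2 - 1. Then there exists a parity-check matrix of C with at most 2^(n·H((k+1)/n)) rows whose dead-end set enumerator equals the incorrigible set enumerator of C, where H is the binary entropy function. -/

import Mathlib

open Finset

variable {ι : Type*}

/-- Support of a binary word. -/
def supp [Fintype ι] (x : ι → ZMod 2) : Finset ι :=
  Finset.univ.filter (fun j => x j ≠ 0)

/-- Hamming weight of a binary word. -/
def wt [Fintype ι] (x : ι → ZMod 2) : ℕ := (supp x).card

/-- `S` is a stopping set for the matrix `H` if no row of the column-submatrix `H_S`
has weight exactly one. -/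
def IsStoppingSet {ρ : Type*} (H : Matrix ρ ι (ZMod 2)) (S : Finset ι) : Prop :=
  ∀ i : ρ, (S.filter (fun j => H i j = 1)).card ≠ 1

/-- The dual code of a binary linear code. -/
def dualCode [Fintype ι] (C : Submodule (ZMod 2) (ι → ZMod 2)) :
    Submodule (ZMod 2) (ι → ZMod 2) where
  carrier := {y | ∀ x ∈ C, ∑ j, y j * x j = 0}
  add_mem' := by
    intro a b ha hb x hx
    simp only [Set.mem_setOf_eq] at *
    simp [Pi.add_apply, add_mul, Finset.sum_add_distrib, ha x hx, hb x hx]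
  zero_mem' := by intro x hx; simp
  smul_mem' := by
    intro c a ha x hx
    simp only [Set.mem_setOf_eq] at *
    simp [Pi.smul_apply, smul_eq_mul, mul_assoc, ← Finset.mul_sum, ha x hx]

/-- The complete parity-check matrix of `C`: rows indexed by all dual codewords. -/
def Hstar [Fintype ι] (C : Submodule (ZMod 2) (ι → ZMod 2)) :
    Matrix (dualCode C) ι (ZMod 2) := fun y j => (y : ι → ZMod 2) j

/-- A code is minimum stopping if every stopping set of its complete parity-check
matrix is the support of a codeword. -/
def MinStopping [Fintype ι] (C : Submodule (ZMod 2) (ι → ZMod 2)) : Prop :=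
  ∀ S : Finset ι, IsStoppingSet (Hstar C) S → ∃ c ∈ C, supp c = S

/-- `H` is a parity-check matrix for `C` : the words checked by all rows of `H`
are exactly the codewords of `C`. -/
def IsPCM {ρ : Type*} [Fintype ι] (C : Submodule (ZMod 2) (ι → ZMod 2))
    (H : Matrix ρ ι (ZMod 2)) : Prop :=
  ∀ x : ι → ZMod 2, x ∈ C ↔ ∀ i : ρ, ∑ j, H i j * x j = 0

/-- The binary entropy function (base 2). -/
noncomputable def binEnt (x : ℝ) : ℝ := -x * Real.logb 2 x - (1 - x) * Real.logb 2 (1 - x)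

/-!
The parity-check matrix has as rows all dual codewords of weight at most `k + 1`. By a dimension
count, any `k + 1` coordinates support a nonzero dual codeword, so a heavier dual codeword `y`
is the sum of two lighter dual codewords whose supports lie in `supp y`; hence every dual codeword
is a sum of light dual codewords supported inside its own support. This gives the parity-check
property. If a nonempty set `T` contains the support of no nonzero codeword, restriction of the
dual code to `T` is onto, so some dual codeword meets `T` in a single point `t`; one of its light
summands is nonzero at `t` and therefore also meets `T` exactly in `t`, so `T` is not a stopping
set. Conversely a codeword meets every dual codeword in an even number of positions. The number
of rows is at most `∑_{i ≤ k+1} (n choose i) ≤ 2^(n H((k+1)/n))`, comparing each binomial term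
with the binomial expansion of `(λ + (1 - λ))^n` at `λ = (k+1)/n ≤ 1/2`.
-/

open Module

section Supports

variable [Fintype ι]

lemma mem_supp {x : ι → ZMod 2} {j : ι} : j ∈ supp x ↔ x j ≠ 0 := by simp [supp]

lemma eq_one_of_ne_zero_zmod_two {a : ZMod 2} (h : a ≠ 0) : a = 1 := by revert a; decide

lemma filter_eq_one_eq_inter_supp [DecidableEq ι] (S : Finset ι) (x : ι → ZMod 2) :
    S.filter (fun j => x j = 1) = S ∩ supp x := by
  ext j
  simp only [mem_filter, mem_inter, mem_supp]
  constructor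
  · rintro ⟨hj, h⟩; exact ⟨hj, by simp [h]⟩
  · rintro ⟨hj, h⟩; exact ⟨hj, eq_one_of_ne_zero_zmod_two h⟩

lemma supp_eq_empty {x : ι → ZMod 2} : supp x = ∅ ↔ x = 0 := by
  simp [supp, Finset.filter_eq_empty_iff, funext_iff]

lemma supp_nonempty {x : ι → ZMod 2} (h : x ≠ 0) : (supp x).Nonempty :=
  Finset.nonempty_iff_ne_empty.mpr (supp_eq_empty.not.mpr h)

lemma supp_injective : Function.Injective (supp (ι := ι)) := by
  intro x y h
  funext j
  have hj : x j ≠ 0 ↔ y j ≠ 0 := by rw [← mem_supp, ← mem_supp, h]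
  by_cases hx : x j = 0
  · rw [hx, eq_comm]; simpa [hx] using hj
  · rw [eq_one_of_ne_zero_zmod_two hx, eq_one_of_ne_zero_zmod_two (hj.mp hx)]

lemma supp_add_of_subset [DecidableEq ι] {x u : ι → ZMod 2} (h : supp u ⊆ supp x) :
    supp (x + u) = supp x \ supp u := by
  ext j
  simp only [mem_supp, mem_sdiff, Pi.add_apply]
  by_cases hu : u j = 0
  · simp [hu]
  · have hx := eq_one_of_ne_zero_zmod_two (mem_supp.mp (h (mem_supp.mpr hu)))
    rw [eq_one_of_ne_zero_zmod_two hu, hx]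
    decide

lemma wt_add_lt_of_subset [DecidableEq ι] {x u : ι → ZMod 2} (h : supp u ⊆ supp x)
    (hu : u ≠ 0) : wt (x + u) < wt x := by
  rw [wt, supp_add_of_subset h, card_sdiff_of_subset h]
  have := (supp_nonempty hu).card_pos
  have := card_le_card h
  unfold wt; omega

lemma dotProduct_eq_card_inter [DecidableEq ι] (x y : ι → ZMod 2) :
    x ⬝ᵥ y = #(supp x ∩ supp y) := by
  rw [dotProduct, ← sum_filter_ne_zero]
  have : univ.filter (fun j => x j * y j ≠ 0) = supp x ∩ supp y := by
    ext j; simp [mem_supp]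
  rw [this, sum_congr rfl fun j hj => ?_, sum_const, nsmul_one]
  obtain ⟨hx, hy⟩ := mem_inter.mp hj
  rw [eq_one_of_ne_zero_zmod_two (mem_supp.mp hx), eq_one_of_ne_zero_zmod_two (mem_supp.mp hy),
    mul_one]

end Supports

section Duality

variable [Fintype ι]

abbrev dotForm : LinearMap.BilinForm (ZMod 2) (ι → ZMod 2) :=
  dotProductBilin (ZMod 2) (ZMod 2)

lemma dualCode_eq_orthogonal (C : Submodule (ZMod 2) (ι → ZMod 2)) :
    dualCode C = dotForm.orthogonal C := by
  ext y
  simp only [LinearMap.BilinForm.mem_orthogonal_iff, dotProductBilin_apply_apply]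
  exact forall₂_congr fun x _ => by rw [dotProduct_comm]; rfl

lemma dotForm_nondegenerate : (dotForm (ι := ι)).Nondegenerate := by
  classical
  refine ⟨fun x hx => dotProduct_eq_zero_iff.mp hx, fun y hy => ?_⟩
  exact dotProduct_eq_zero_iff.mp fun x => by rw [dotProduct_comm]; exact hy x

lemma dotForm_isRefl : (dotForm (ι := ι)).IsRefl := by
  intro x y h
  simpa [dotProduct_comm] using h

lemma finrank_dualCode (C : Submodule (ZMod 2) (ι → ZMod 2)) :
    finrank (ZMod 2) (dualCode C) = Fintype.card ι - finrank (ZMod 2) C := by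
  rw [dualCode_eq_orthogonal, LinearMap.BilinForm.finrank_orthogonal dotForm_nondegenerate,
    finrank_fintype_fun_eq_card]

lemma dualCode_dualCode (C : Submodule (ZMod 2) (ι → ZMod 2)) :
    dualCode (dualCode C) = C := by
  rw [dualCode_eq_orthogonal, dualCode_eq_orthogonal,
    LinearMap.BilinForm.orthogonal_orthogonal dotForm_nondegenerate dotForm_isRefl]

lemma dualCode_bot : dualCode (⊥ : Submodule (ZMod 2) (ι → ZMod 2)) = ⊤ :=
  eq_top_iff.mpr fun y _ x hx => by simp [(Submodule.mem_bot _).mp hx]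

end Duality

section LightDualWords

variable [Fintype ι] {C : Submodule (ZMod 2) (ι → ZMod 2)}

lemma exists_mem_dualCode_supp_subset [DecidableEq ι] {A : Finset ι}
    (hA : finrank (ZMod 2) C < #A) : ∃ u ∈ dualCode C, u ≠ 0 ∧ supp u ⊆ A := by
  let r : dualCode C →ₗ[ZMod 2] (↥(Aᶜ) → ZMod 2) :=
    LinearMap.funLeft (ZMod 2) (ZMod 2) Subtype.val ∘ₗ (dualCode C).subtype
  have hr : LinearMap.ker r ≠ ⊥ := LinearMap.ker_ne_bot_of_finrank_lt <| by
    rw [finrank_dualCode, finrank_fintype_fun_eq_card, Fintype.card_coe, card_compl]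
    have := card_le_univ A
    omega
  obtain ⟨⟨u, hu⟩, hker, hu0⟩ := Submodule.exists_mem_ne_zero_of_ne_bot hr
  refine ⟨u, hu, fun h => hu0 (by simp [h]), fun j hj => ?_⟩
  by_contra hjA
  exact mem_supp.mp hj (congrFun hker ⟨j, mem_compl.mpr hjA⟩)

lemma map_funLeft_dualCode_eq_top {T : Finset ι} (hT : ∀ c ∈ C, supp c ⊆ T → c = 0) :
    (dualCode C).map (LinearMap.funLeft (ZMod 2) (ZMod 2) ((↑) : T → ι)) = ⊤ := by
  classical
  set U := (dualCode C).map (LinearMap.funLeft (ZMod 2) (ZMod 2) ((↑) : T → ι))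
  suffices dualCode U = ⊥ by rw [← dualCode_dualCode U, this, dualCode_bot]
  refine (Submodule.eq_bot_iff _).mpr fun w hw => ?_
  let x : ι → ZMod 2 := fun j => if h : j ∈ T then w ⟨j, h⟩ else 0
  have hxT : supp x ⊆ T := fun j hj => by
    by_contra h
    exact mem_supp.mp hj (dif_neg h)
  have hxC : x ∈ C := by
    rw [← dualCode_dualCode C]
    intro y hy
    calc ∑ j, x j * y j = ∑ a : T, w a * y a := by
          rw [← sum_subset (subset_univ T) fun j _ hj => by simp [x, hj], ← sum_coe_sort T]
          exact sum_congr rfl fun a _ => by simp [x]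
      _ = 0 := hw _ ⟨y, hy, rfl⟩
  funext a
  simpa [x] using congrFun (hT x hxC hxT) a

lemma exists_mem_dualCode_inter_supp_eq_singleton [DecidableEq ι] {T : Finset ι}
    (hT : ∀ c ∈ C, supp c ⊆ T → c = 0) {t : ι} (ht : t ∈ T) :
    ∃ y ∈ dualCode C, T ∩ supp y = {t} := by
  obtain ⟨y, hy, hyT⟩ := (map_funLeft_dualCode_eq_top hT).ge
    (Submodule.mem_top (x := Pi.single ⟨t, ht⟩ 1))
  have hyT' (j : ι) (hj : j ∈ T) : y j = if j = t then 1 else 0 := by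
    simpa [Pi.single_apply, Subtype.ext_iff] using congrFun hyT ⟨j, hj⟩
  refine ⟨y, hy, ext fun j => ?_⟩
  by_cases hj : j ∈ T
  · rcases eq_or_ne j t with rfl | hjt
    · simp [hj, mem_supp, hyT' j hj]
    · simp [hj, hjt, mem_supp, hyT' j hj]
  · simp [hj, ne_of_mem_of_not_mem ht hj |>.symm]

variable (C) in
def lightDualWords : Set (ι → ZMod 2) :=
  {u | u ∈ dualCode C ∧ wt u ≤ finrank (ZMod 2) C + 1}

lemma mem_span_lightDualWords [DecidableEq ι] {s : Finset ι} {y : ι → ZMod 2}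
    (hy : y ∈ dualCode C) (hys : supp y ⊆ s) :
    y ∈ Submodule.span (ZMod 2) {u ∈ lightDualWords C | supp u ⊆ s} := by
  induction hw : wt y using Nat.strong_induction_on generalizing y with
  | _ w ih =>
  subst hw
  by_cases hle : wt y ≤ finrank (ZMod 2) C + 1
  · exact Submodule.subset_span ⟨⟨hy, hle⟩, hys⟩
  obtain ⟨t, ht⟩ : (supp y).Nonempty := card_pos.mp (by unfold wt at hle; omega)
  obtain ⟨u, hu, hu0, hut⟩ := exists_mem_dualCode_supp_subset (C := C) (A := (supp y).erase t)
    (by rw [card_erase_of_mem ht]; unfold wt at hle; omega)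
  have huy : supp u ⊆ supp y := hut.trans (erase_subset t _)
  have hyu : y + u ∈ Submodule.span (ZMod 2) {u ∈ lightDualWords C | supp u ⊆ s} :=
    ih _ (wt_add_lt_of_subset huy hu0) (add_mem hy hu)
      ((supp_add_of_subset huy).trans_subset (sdiff_subset.trans hys)) rfl
  have hu' : u ∈ Submodule.span (ZMod 2) {u ∈ lightDualWords C | supp u ⊆ s} :=
    ih _ (card_lt_card (hut.trans_ssubset (erase_ssubset ht))) hu (huy.trans hys) rfl
  simpa using sub_mem hyu hu'

lemma dotProduct_eq_zero_of_forall_lightDualWords {x y : ι → ZMod 2}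
    (hx : ∀ u ∈ lightDualWords C, u ⬝ᵥ x = 0) (hy : y ∈ dualCode C) : y ⬝ᵥ x = 0 := by
  classical
  have hspan : Submodule.span (ZMod 2) {u ∈ lightDualWords C | supp u ⊆ univ} ≤
      LinearMap.ker ((dotProductBilin (ZMod 2) (ZMod 2)).flip x) :=
    Submodule.span_le.mpr fun u hu => hx u hu.1
  exact hspan (mem_span_lightDualWords hy (subset_univ _))

lemma exists_lightDualWords_inter_supp_eq_singleton [DecidableEq ι] {T : Finset ι}
    (hT : ∀ c ∈ C, supp c ⊆ T → c = 0) {t : ι} (ht : t ∈ T) :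
    ∃ u ∈ lightDualWords C, T ∩ supp u = {t} := by
  obtain ⟨y, hy, hyT⟩ := exists_mem_dualCode_inter_supp_eq_singleton hT ht
  have hyt : y t ≠ 0 := mem_supp.mp (mem_inter.mp (hyT.ge (mem_singleton_self t))).2
  obtain ⟨u, ⟨hu, huy⟩, hut⟩ :
      ∃ u ∈ {u ∈ lightDualWords C | supp u ⊆ supp y}, u t ≠ 0 := by
    by_contra! h
    have hspan : Submodule.span (ZMod 2) {u ∈ lightDualWords C | supp u ⊆ supp y} ≤
        LinearMap.ker (LinearMap.proj t) :=
      Submodule.span_le.mpr h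
    exact hyt (hspan (mem_span_lightDualWords hy subset_rfl))
  refine ⟨u, hu, (subset_singleton_iff.mp ?_).resolve_left ?_⟩
  · exact hyT ▸ inter_subset_inter_left huy
  · exact (ne_empty_of_mem (mem_inter.mpr ⟨ht, mem_supp.mpr hut⟩))

end LightDualWords

section ParityCheckMatrix

variable [Fintype ι] {C : Submodule (ZMod 2) (ι → ZMod 2)} {ρ : Type*}
  {H : Matrix ρ ι (ZMod 2)}

lemma isPCM_of_range_eq_lightDualWords (hH : Set.range H = lightDualWords C) : IsPCM C H := by
  intro x
  constructor
  · rintro hx i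
    exact (hH.le ⟨i, rfl⟩).1 x hx
  · intro hx
    rw [← dualCode_dualCode C]
    intro y hy
    rw [← dotProduct, dotProduct_comm]
    refine dotProduct_eq_zero_of_forall_lightDualWords (fun u hu => ?_) hy
    obtain ⟨i, rfl⟩ := hH.ge hu
    exact hx i

lemma isStoppingSet_supp [DecidableEq ι] (hH : ∀ i, H i ∈ dualCode C) {c : ι → ZMod 2}
    (hc : c ∈ C) : IsStoppingSet H (supp c) := by
  intro i hi
  rw [filter_eq_one_eq_inter_supp, inter_comm] at hi
  have := dotProduct_eq_card_inter (H i) c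
  rw [hi, Nat.cast_one] at this
  exact one_ne_zero (this.symm.trans ((hH i) c hc))

lemma not_isStoppingSet [DecidableEq ι] (hH : lightDualWords C ⊆ Set.range H) {T : Finset ι}
    (hT : ∀ c ∈ C, supp c ⊆ T → c = 0) (hT₀ : T.Nonempty) : ¬ IsStoppingSet H T := by
  obtain ⟨t, ht⟩ := hT₀
  obtain ⟨u, hu, hTu⟩ := exists_lightDualWords_inter_supp_eq_singleton hT ht
  obtain ⟨i, rfl⟩ := hH hu
  intro hstop
  exact hstop i (by rw [filter_eq_one_eq_inter_supp, hTu, card_singleton])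

lemma exists_stoppingSet_iff_of_range_eq_lightDualWords [DecidableEq ι]
    (hH : Set.range H = lightDualWords C) (S : Finset ι) :
    (∃ T ⊆ S, T.Nonempty ∧ IsStoppingSet H T) ↔ ∃ c ∈ C, c ≠ 0 ∧ supp c ⊆ S := by
  constructor
  · rintro ⟨T, hTS, hT₀, hstop⟩
    by_contra! h
    exact not_isStoppingSet hH.ge
      (fun c hc hcT => by_contra fun hc0 => h c hc hc0 (hcT.trans hTS)) hT₀ hstop
  · rintro ⟨c, hc, hc0, hcS⟩
    exact ⟨supp c, hcS, supp_nonempty hc0,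
      isStoppingSet_supp (fun i => (hH.le ⟨i, rfl⟩).1) hc⟩

end ParityCheckMatrix

lemma exists_matrix_range_eq {R : Type*} (s : Set (ι → R)) [Finite s] :
    ∃ H : Matrix (Fin (Nat.card s)) ι R, Set.range H = s :=
  ⟨fun i => (Finite.equivFin s).symm i, by
    rw [← Function.comp_def, EquivLike.range_comp _ (Finite.equivFin s).symm,
      Subtype.range_coe]⟩

lemma card_wt_le [Fintype ι] [DecidableEq ι] (m : ℕ) :
    #{x : ι → ZMod 2 | wt x ≤ m} ≤ ∑ i ∈ range (m + 1), (Fintype.card ι).choose i := by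
  calc #{x : ι → ZMod 2 | wt x ≤ m}
      ≤ #((range (m + 1)).biUnion fun i => powersetCard i (univ : Finset ι)) :=
        card_le_card_of_injOn supp
          (fun x hx => mem_biUnion.mpr
            ⟨wt x, mem_range.mpr (Nat.lt_succ_of_le (mem_filter.mp hx).2),
              mem_powersetCard_univ.mpr rfl⟩)
          supp_injective.injOn
    _ ≤ ∑ i ∈ range (m + 1), #(powersetCard i (univ : Finset ι)) := card_biUnion_le
    _ = ∑ i ∈ range (m + 1), (Fintype.card ι).choose i := by simp [card_powersetCard]

lemma card_lightDualWords_le [Fintype ι] (C : Submodule (ZMod 2) (ι → ZMod 2)) :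
    Nat.card (lightDualWords C) ≤
      ∑ i ∈ range (finrank (ZMod 2) C + 2), (Fintype.card ι).choose i := by
  classical
  refine le_trans ?_ (card_wt_le _)
  rw [← Nat.card_eq_finsetCard]
  exact Nat.card_mono (Set.toFinite _) fun x hx => by simpa using hx.2

lemma pow_mul_pow_sub_le_pow_mul_pow_sub {p q : ℝ} (hp : 0 ≤ p) (hpq : p ≤ q) {i m n : ℕ}
    (him : i ≤ m) (hmn : m ≤ n) : p ^ m * q ^ (n - m) ≤ p ^ i * q ^ (n - i) := by
  have hq : 0 ≤ q := hp.trans hpq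
  calc p ^ m * q ^ (n - m) = p ^ i * (p ^ (m - i) * q ^ (n - m)) := by
        rw [← mul_assoc, ← pow_add, Nat.add_sub_cancel' him]
    _ ≤ p ^ i * (q ^ (m - i) * q ^ (n - m)) := by gcongr
    _ = p ^ i * q ^ (n - i) := by rw [← pow_add]; congr 2; omega

lemma sum_choose_mul_pow_le_one {n m : ℕ} (hmn : m ≤ n) {p : ℝ} (hp₀ : 0 ≤ p)
    (hp : p ≤ 1 - p) :
    (∑ i ∈ range (m + 1), (n.choose i : ℝ)) * (p ^ m * (1 - p) ^ (n - m)) ≤ 1 := by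
  calc (∑ i ∈ range (m + 1), (n.choose i : ℝ)) * (p ^ m * (1 - p) ^ (n - m))
      ≤ ∑ i ∈ range (m + 1), p ^ i * (1 - p) ^ (n - i) * n.choose i := by
        rw [sum_mul]
        refine sum_le_sum fun i hi => ?_
        rw [mul_comm]
        gcongr ?_ * _
        exact pow_mul_pow_sub_le_pow_mul_pow_sub hp₀ hp (Nat.lt_succ_iff.mp (mem_range.mp hi)) hmn
    _ ≤ ∑ i ∈ range (n + 1), p ^ i * (1 - p) ^ (n - i) * n.choose i :=
        sum_le_sum_of_subset_of_nonneg (range_subset_range.mpr (by omega))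
          fun i _ _ => by have := hp₀.trans hp; positivity
    _ = 1 := by rw [← add_pow, add_sub_cancel, one_pow]

lemma two_rpow_mul_binEnt {p : ℝ} (hp₀ : 0 < p) (hp₁ : p < 1) (a : ℝ) :
    (2 : ℝ) ^ (a * binEnt p) = (p ^ (a * p) * (1 - p) ^ (a * (1 - p)))⁻¹ := by
  have hq₀ : 0 < 1 - p := sub_pos.mpr hp₁
  rw [show a * binEnt p = Real.logb 2 p * -(a * p) + Real.logb 2 (1 - p) * -(a * (1 - p)) by
      unfold binEnt; ring,
    Real.rpow_add two_pos, Real.rpow_mul zero_le_two, Real.rpow_mul zero_le_two,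
    Real.rpow_logb two_pos (by norm_num) hp₀, Real.rpow_logb two_pos (by norm_num) hq₀,
    Real.rpow_neg hp₀.le, Real.rpow_neg hq₀.le, mul_inv]

lemma sum_choose_le_two_rpow {n m : ℕ} (hm : 0 < m) (hmn : 2 * m ≤ n) :
    ∑ i ∈ range (m + 1), (n.choose i : ℝ) ≤ 2 ^ ((n : ℝ) * binEnt (m / n)) := by
  have hn : (0 : ℝ) < n := by exact_mod_cast hm.trans_le (by omega)
  set p : ℝ := m / n with hp
  have hnp : (n : ℝ) * p = m := by rw [hp]; field_simp
  have hnq : (n : ℝ) * (1 - p) = (n - m : ℕ) := by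
    rw [mul_sub, hnp, Nat.cast_sub (by omega), mul_one]
  have hp₀ : 0 < p := by positivity
  have hpq : p ≤ 1 - p := by
    rw [hp, le_sub_iff_add_le, ← add_div, div_le_one hn]
    exact_mod_cast (by omega : m + m ≤ n)
  have hw : 0 < p ^ m * (1 - p) ^ (n - m) := by have := hp₀.trans_le hpq; positivity
  rw [two_rpow_mul_binEnt hp₀ (by linarith) n, hnp, hnq, Real.rpow_natCast, Real.rpow_natCast,
    ← one_div, le_div_iff₀ hw]
  exact sum_choose_mul_pow_le_one (by omega) hp₀.le hpq

/-- If k ≤ n/2 - 1, there exists a parity-check matrix of C with at most 2^(n·H((k+1)/n))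
rows whose dead-end set enumerator equals the incorrigible set enumerator of C. -/
theorem stmt_12 {n k : ℕ} (C : Submodule (ZMod 2) (Fin n → ZMod 2))
    (hk : Module.finrank (ZMod 2) C = k)
    (hkn : (k : ℝ) ≤ (n : ℝ) / 2 - 1) :
    ∃ (r : ℕ) (H : Matrix (Fin r) (Fin n) (ZMod 2)), IsPCM C H ∧
      (r : ℝ) ≤ (2 : ℝ) ^ ((n : ℝ) * binEnt ((k + 1 : ℝ) / (n : ℝ))) ∧
      ∀ S : Finset (Fin n),
        ((∃ T ⊆ S, T.Nonempty ∧ IsStoppingSet H T) ↔ ∃ c ∈ C, c ≠ 0 ∧ supp c ⊆ S) := by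
  obtain ⟨H, hH⟩ := exists_matrix_range_eq (lightDualWords C)
  refine ⟨_, H, isPCM_of_range_eq_lightDualWords hH, ?_,
    exists_stoppingSet_iff_of_range_eq_lightDualWords hH⟩
  have hcard := card_lightDualWords_le C
  rw [hk, Fintype.card_fin] at hcard
  have hent := sum_choose_le_two_rpow (n := n) (m := k + 1) k.succ_pos
    (by exact_mod_cast (by linarith : (2 * (k + 1) : ℝ) ≤ n))
  push_cast at hent
  calc (Nat.card (lightDualWords C) : ℝ) ≤ ∑ i ∈ range (k + 2), (n.choose i : ℝ) := by
        exact_mod_cast hcard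
    _ ≤ _ := hent
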